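/- arXiv:2001.02527 — 4 statements merged into one kernel-verified Lean document; each statement's English description precedes it below -/
import Mathlib

section
/- Fix a state S ∈ 𝒮. The map (ΔT, I) ↦ η(ΔT, S, I), defined for ΔT ∈ {1,…,τ} and nonempty subsets I ⊆ {1,…,N}, is injective, and none of its values is the all-zero matrix O. Moreover, for every ΔT > τ and every nonempty I, η(ΔT, S, I) = O. -/
/-
Left multiplication by `D` shifts the rows of a matrix down by one, discarding the last row, so
`D^k M` is `M` pushed down by `k` rows with `k` zero rows on top. Hence `η(ΔT, S, I)` has zero
rows `1, …, ΔT − 1`, the indicator row of `I` at position `ΔT`, and the shifted `S` below it.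
The first nonzero row therefore recovers `ΔT`, that row recovers `I`, and for `ΔT > τ`
everything has been pushed out of the matrix.
-/

open Finset

/-- The `τ×τ` lower shift matrix `D`, with `D r c = 1` iff `r − c = 1`. -/
def shiftD (τ : ℕ) : Matrix (Fin τ) (Fin τ) ℤ :=
  Matrix.of fun r c => if (r : ℕ) = (c : ℕ) + 1 then 1 else 0

/-- The `τ×N` indicator matrix `𝐈(I)`, with entry `1` iff the row is the first row and the
column belongs to `I`. -/
def indMat (τ N : ℕ) (I : Finset (Fin N)) : Matrix (Fin τ) (Fin N) ℤ :=
  Matrix.of fun r c => if (r : ℕ) = 0 ∧ c ∈ I then 1 else 0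

/-- The state-update map `η(ΔT, S, I) = D^{ΔT−1}(D S + 𝐈(I))`. -/
def eta (τ N : ℕ) (ΔT : ℕ) (S : Matrix (Fin τ) (Fin N) ℤ) (I : Finset (Fin N)) :
    Matrix (Fin τ) (Fin N) ℤ :=
  shiftD τ ^ (ΔT - 1) * (shiftD τ * S + indMat τ N I)

lemma shiftD_mul_apply {τ n : ℕ} (M : Matrix (Fin τ) (Fin n) ℤ) (r : Fin τ) (c : Fin n) :
    (shiftD τ * M) r c = if h : 1 ≤ (r : ℕ) then M ⟨r - 1, by omega⟩ c else 0 := by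
  rw [Matrix.mul_apply]
  split_ifs with h
  · rw [sum_eq_single ⟨r - 1, by omega⟩]
    · rw [shiftD, Matrix.of_apply, if_pos (by simp; omega), one_mul]
    · intro j _ hj
      have : (r : ℕ) ≠ j + 1 := fun h' => hj (Fin.ext (by simp; omega))
      simp [shiftD, this]
    · simp
  · refine sum_eq_zero fun j _ => ?_
    have : (r : ℕ) ≠ j + 1 := by omega
    simp [shiftD, this]

lemma shiftD_pow_mul_apply {τ n : ℕ} (k : ℕ) (M : Matrix (Fin τ) (Fin n) ℤ) (r : Fin τ)
    (c : Fin n) :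
    (shiftD τ ^ k * M) r c = if h : k ≤ (r : ℕ) then M ⟨r - k, by omega⟩ c else 0 := by
  induction k generalizing r with
  | zero => simp
  | succ k ih =>
    rw [pow_succ', Matrix.mul_assoc, shiftD_mul_apply]
    by_cases h : k + 1 ≤ (r : ℕ)
    · rw [dif_pos (by omega), ih, dif_pos (by simp; omega), dif_pos h]
      simp only [Nat.sub_sub, Nat.add_comm 1 k]
    · rw [dif_neg h]
      split_ifs with h₁
      · rw [ih, dif_neg (by simp; omega)]
      · rfl

section eta

variable {τ N ΔT : ℕ} (S : Matrix (Fin τ) (Fin N) ℤ) (I : Finset (Fin N))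

lemma eta_apply_of_lt {r : Fin τ} (hr : (r : ℕ) < ΔT - 1) (c : Fin N) :
    eta τ N ΔT S I r c = 0 := by
  rw [eta, shiftD_pow_mul_apply, dif_neg (by omega)]

lemma eta_apply_of_eq {r : Fin τ} (hr : (r : ℕ) = ΔT - 1) (c : Fin N) :
    eta τ N ΔT S I r c = if c ∈ I then 1 else 0 := by
  rw [eta, shiftD_pow_mul_apply, dif_pos hr.ge, Matrix.add_apply, shiftD_mul_apply,
    dif_neg (by simp; omega)]
  simp [indMat, hr]

lemma eta_eq_zero_of_lt (hΔT : τ < ΔT) : eta τ N ΔT S I = 0 := by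
  ext r c
  exact eta_apply_of_lt S I (by omega) c

lemma eta_ne_zero (h₁ : 1 ≤ ΔT) (hτ : ΔT ≤ τ) (hI : I.Nonempty) : eta τ N ΔT S I ≠ 0 := by
  obtain ⟨c, hc⟩ := hI
  intro h
  have hrow := eta_apply_of_eq S I (r := ⟨ΔT - 1, by omega⟩) rfl c
  rw [h, if_pos hc] at hrow
  exact zero_ne_one hrow

variable {ΔT₁ ΔT₂ : ℕ} {I₁ I₂ : Finset (Fin N)}

lemma le_of_eta_eq (h₁ : 1 ≤ ΔT₁) (hτ : ΔT₁ ≤ τ) (hI₁ : I₁.Nonempty)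
    (h : eta τ N ΔT₁ S I₁ = eta τ N ΔT₂ S I₂) : ΔT₂ ≤ ΔT₁ := by
  by_contra hlt
  obtain ⟨c, hc⟩ := hI₁
  have hrow := eta_apply_of_eq S I₁ (r := ⟨ΔT₁ - 1, by omega⟩) rfl c
  rw [h, eta_apply_of_lt S I₂ (by simp; omega), if_pos hc] at hrow
  exact zero_ne_one hrow

lemma eq_and_eq_of_eta_eq (h₁ : 1 ≤ ΔT₁) (hτ₁ : ΔT₁ ≤ τ) (h₂ : 1 ≤ ΔT₂) (hτ₂ : ΔT₂ ≤ τ)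
    (hI₁ : I₁.Nonempty) (hI₂ : I₂.Nonempty)
    (h : eta τ N ΔT₁ S I₁ = eta τ N ΔT₂ S I₂) : ΔT₁ = ΔT₂ ∧ I₁ = I₂ := by
  obtain rfl : ΔT₁ = ΔT₂ :=
    le_antisymm (le_of_eta_eq S h₂ hτ₂ hI₂ h.symm) (le_of_eta_eq S h₁ hτ₁ hI₁ h)
  refine ⟨rfl, ext fun c => ?_⟩
  have hrow := congrFun (congrFun h ⟨ΔT₁ - 1, by omega⟩) c
  rw [eta_apply_of_eq S I₁ rfl, eta_apply_of_eq S I₂ rfl] at hrow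
  by_cases hc₁ : c ∈ I₁ <;> by_cases hc₂ : c ∈ I₂ <;> simp_all

end eta

theorem stmt_2_general (τ N : ℕ)
    (S : Matrix (Fin τ) (Fin N) ℤ) :
    (∀ ΔT₁ ΔT₂ : ℕ, 1 ≤ ΔT₁ → ΔT₁ ≤ τ → 1 ≤ ΔT₂ → ΔT₂ ≤ τ →
        ∀ I₁ I₂ : Finset (Fin N), I₁.Nonempty → I₂.Nonempty →
          eta τ N ΔT₁ S I₁ = eta τ N ΔT₂ S I₂ → ΔT₁ = ΔT₂ ∧ I₁ = I₂) ∧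
      (∀ ΔT : ℕ, 1 ≤ ΔT → ΔT ≤ τ → ∀ I : Finset (Fin N), I.Nonempty →
        eta τ N ΔT S I ≠ 0) ∧
      (∀ ΔT : ℕ, τ < ΔT → ∀ I : Finset (Fin N), I.Nonempty → eta τ N ΔT S I = 0) :=
  ⟨fun _ _ h₁ hτ₁ h₂ hτ₂ _ _ hI₁ hI₂ => eq_and_eq_of_eta_eq S h₁ hτ₁ h₂ hτ₂ hI₁ hI₂,
    fun _ h₁ hτ I hI => eta_ne_zero S I h₁ hτ hI,
    fun _ hΔT I _ => eta_eq_zero_of_lt S I hΔT⟩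

/-- **Injectivity and range of the state-update map.**  Fix a binary state `S`.  The map
`(ΔT, I) ↦ η(ΔT, S, I)` on `ΔT ∈ {1,…,τ}` and nonempty `I ⊆ {1,…,N}` is injective, never
takes the value `O` (the all-zero matrix), and for `ΔT > τ` it is identically `O`. -/
theorem stmt_2 (τ N : ℕ) (hτ : 1 ≤ τ) (hN : 1 ≤ N)
    (S : Matrix (Fin τ) (Fin N) ℤ) (hS : ∀ r c, S r c = 0 ∨ S r c = 1) :
    (∀ ΔT₁ ΔT₂ : ℕ, 1 ≤ ΔT₁ → ΔT₁ ≤ τ → 1 ≤ ΔT₂ → ΔT₂ ≤ τ →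
        ∀ I₁ I₂ : Finset (Fin N), I₁.Nonempty → I₂.Nonempty →
          eta τ N ΔT₁ S I₁ = eta τ N ΔT₂ S I₂ → ΔT₁ = ΔT₂ ∧ I₁ = I₂) ∧
      (∀ ΔT : ℕ, 1 ≤ ΔT → ΔT ≤ τ → ∀ I : Finset (Fin N), I.Nonempty →
        eta τ N ΔT S I ≠ 0) ∧
      (∀ ΔT : ℕ, τ < ΔT → ∀ I : Finset (Fin N), I.Nonempty → eta τ N ΔT S I = 0) :=
  stmt_2_general τ N S
end

section
/- Let A be a finite set with |A| = M ≥ 1 and p a probability mass function on A, and let p_{(1)} ≥ p_{(2)} ≥ … ≥ p_{(M)} be the values of p sorted in non-increasing order. Then for every injective map f from A into the set of nonempty finite binary strings, the expected codeword length satisfies Σ_{a∈A} p(a)·len(f(a)) ≥ Σ_{r=1}^{M} p_{(r)} · ⌈log₂(r/2 + 1)⌉. -/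
/-!
Only `2 ^ (ℓ + 1) - 2` nonempty binary strings have length at most `ℓ`, so an injective code gives
at most that many messages a codeword of length `≤ ℓ`. Since
`⌈log₂ ((r + 1) / 2 + 1)⌉ = clog₂ (r + 3) - 1`, the ordered assignment gives length `≤ ℓ` exactly to
the first `2 ^ (ℓ + 1) - 2` messages, which are the most probable ones. Hence for every `ℓ` the
ordered assignment maximises the probability of a codeword of length `≤ ℓ`, and the layer-cake
formula `E[len] = ∑ ℓ, P(len > ℓ)` turns this into the bound on expected lengths.
-/

open Finset

/-- `l` read as the binary expansion, least significant bit first, of a number whose leading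
bit `1` is appended after `l`. -/
def List.binaryValueWithLeadingOne (l : List Bool) : ℕ :=
  Nat.ofDigits 2 (l.map Bool.toNat ++ [1])

namespace List

lemma digits_two_binaryValueWithLeadingOne (l : List Bool) :
    Nat.digits 2 l.binaryValueWithLeadingOne = l.map Bool.toNat ++ [1] := by
  refine Nat.digits_ofDigits 2 one_lt_two _ ?_ (by simp)
  simp only [mem_append, mem_map, mem_singleton]
  rintro _ (⟨b, -, rfl⟩ | rfl) <;> [exact Bool.toNat_lt b; norm_num]

lemma binaryValueWithLeadingOne_injective : Function.Injective binaryValueWithLeadingOne := by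
  intro l l' h
  have := congrArg (Nat.digits 2) h
  rw [digits_two_binaryValueWithLeadingOne, digits_two_binaryValueWithLeadingOne,
    append_cancel_right_eq] at this
  exact map_injective_iff.mpr (by decide : Function.Injective Bool.toNat) this

lemma binaryValueWithLeadingOne_eq (l : List Bool) :
    binaryValueWithLeadingOne l = Nat.ofDigits 2 (l.map Bool.toNat) + 2 ^ l.length := by
  simp [binaryValueWithLeadingOne, Nat.ofDigits_append]

lemma two_pow_length_le_binaryValueWithLeadingOne (l : List Bool) :
    2 ^ l.length ≤ binaryValueWithLeadingOne l := by
  rw [binaryValueWithLeadingOne_eq]; omega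

lemma binaryValueWithLeadingOne_lt (l : List Bool) :
    binaryValueWithLeadingOne l < 2 ^ (l.length + 1) := by
  have := Nat.ofDigits_lt_base_pow_length (b := 2) (l := l.map Bool.toNat) one_lt_two
    (by simp only [mem_map]; rintro _ ⟨b, -, rfl⟩; exact Bool.toNat_lt b)
  rw [binaryValueWithLeadingOne_eq, pow_succ]
  simp only [length_map] at this
  omega

end List

lemma card_filter_length_le_le_two_pow_sub_two {ι : Type*} [Fintype ι] {c : ι → List Bool}
    (hc : Function.Injective c) (hne : ∀ i, c i ≠ []) (ℓ : ℕ) :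
    #{i | (c i).length ≤ ℓ} ≤ 2 ^ (ℓ + 1) - 2 := by
  refine (card_le_card_of_injOn (t := Ico 2 (2 ^ (ℓ + 1))) (List.binaryValueWithLeadingOne ∘ c)
    ?_ (List.binaryValueWithLeadingOne_injective.comp hc).injOn).trans (by simp)
  intro i hi
  simp only [coe_filter, mem_univ, true_and, Set.mem_ofPred_eq] at hi
  simp only [Function.comp_apply, coe_Ico, Set.mem_Ico]
  constructor
  · exact (Nat.le_self_pow ((List.length_pos_iff.mpr (hne i)).ne') 2).trans
      (c i).two_pow_length_le_binaryValueWithLeadingOne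
  · calc _ < 2 ^ ((c i).length + 1) := (c i).binaryValueWithLeadingOne_lt
      _ ≤ 2 ^ (ℓ + 1) := Nat.pow_le_pow_right two_pos (by omega)

section OrderedSum

variable {ι R : Type*} [AddCommMonoid R] [LinearOrder R] [IsOrderedCancelAddMonoid R]

lemma sum_le_sum_of_card_le_of_forall_sdiff_le [DecidableEq ι] {S T : Finset ι} {q : ι → R}
    (hcard : #S ≤ #T) (hq : ∀ j ∈ T, 0 ≤ q j) (hle : ∀ i ∈ S \ T, ∀ j ∈ T \ S, q i ≤ q j) :
    ∑ i ∈ S, q i ≤ ∑ j ∈ T, q j := by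
  have hsdiff : ∑ i ∈ S \ T, q i ≤ ∑ j ∈ T \ S, q j := by
    rcases (T \ S).eq_empty_or_nonempty with hTS | hTS
    · have : S \ T = ∅ := card_eq_zero.mp <| by
        simpa [hTS] using card_sdiff_le_card_sdiff_iff.mpr hcard
      simp [this, hTS]
    obtain ⟨j₀, hj₀, hmin⟩ := exists_min_image (T \ S) q hTS
    calc ∑ i ∈ S \ T, q i ≤ #(S \ T) • q j₀ := sum_le_card_nsmul _ _ _ fun i hi => hle i hi j₀ hj₀
      _ ≤ #(T \ S) • q j₀ :=
          nsmul_le_nsmul_left (hq j₀ (mem_sdiff.mp hj₀).1) (card_sdiff_le_card_sdiff_iff.mpr hcard)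
      _ ≤ ∑ j ∈ T \ S, q j := card_nsmul_le_sum _ _ _ hmin
  rw [← sum_inter_add_sum_sdiff S T, ← sum_inter_add_sum_sdiff T S, inter_comm]
  exact add_le_add le_rfl hsdiff

lemma Antitone.sum_le_sum_filter_val_lt {M : ℕ} {q : Fin M → R} (hq : Antitone q)
    (hq0 : ∀ r, 0 ≤ q r) {S : Finset (Fin M)} {N : ℕ} (hS : #S ≤ N) :
    ∑ r ∈ S, q r ≤ ∑ r ∈ {r : Fin M | (r : ℕ) < N}, q r := by
  refine sum_le_sum_of_card_le_of_forall_sdiff_le ?_ (fun j _ => hq0 j) fun i hi j hj => hq ?_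
  · rw [Fin.card_filter_val_lt]
    exact le_min (by simpa using card_le_univ S) hS
  · simp only [mem_sdiff, mem_filter, mem_univ, true_and] at hi hj
    exact Fin.le_def.mpr (by omega)

end OrderedSum

section LayerCake

variable {ι R : Type*} [Fintype ι]

lemma sum_mul_natCast_eq_sum_range_sum_filter_lt [Semiring R] (q : ι → R) (h : ι → ℕ) {K : ℕ}
    (hK : ∀ i, h i ≤ K) :
    ∑ i, q i * h i = ∑ ℓ ∈ range K, ∑ i with ℓ < h i, q i := by
  calc ∑ i, q i * h i = ∑ i, ∑ _ℓ ∈ range (h i), q i := by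
        simp only [sum_const, card_range, nsmul_eq_mul']
    _ = _ := sum_comm' fun i ℓ => by
      simp only [mem_univ, mem_range, mem_filter, true_and]
      have := hK i
      omega

lemma sum_mul_natCast_le_of_forall_sum_filter_le [Ring R] [PartialOrder R] [IsOrderedRing R]
    (q : ι → R) {g h : ι → ℕ} (hdom : ∀ ℓ, ∑ i with g i ≤ ℓ, q i ≤ ∑ i with h i ≤ ℓ, q i) :
    ∑ i, q i * h i ≤ ∑ i, q i * g i := by
  set K := univ.sup g ⊔ univ.sup h
  have hgK (i : ι) : g i ≤ K := le_sup_of_le_left (le_sup (mem_univ i))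
  have hhK (i : ι) : h i ≤ K := le_sup_of_le_right (le_sup (mem_univ i))
  rw [sum_mul_natCast_eq_sum_range_sum_filter_lt q h hhK,
    sum_mul_natCast_eq_sum_range_sum_filter_lt q g hgK]
  refine sum_le_sum fun ℓ _ => ?_
  have hsplit (k : ι → ℕ) : ∑ i with ℓ < k i, q i = ∑ i, q i - ∑ i with k i ≤ ℓ, q i := by
    rw [eq_sub_iff_add_eq, ← sum_filter_add_sum_filter_not univ (fun i => ℓ < k i)]
    simp only [not_lt]
  rw [hsplit, hsplit]
  exact sub_le_sub_left (hdom ℓ) _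

end LayerCake

lemma ceil_logb_two_natCast_add_one_div_two_add_one (n : ℕ) :
    ⌈Real.logb 2 ((n + 1 : ℝ) / 2 + 1)⌉ = ((Nat.clog 2 (n + 3) - 1 : ℕ) : ℤ) := by
  have hpos : 0 < Nat.clog 2 (n + 3) := Nat.clog_pos one_lt_two (by omega)
  have hlog : Real.logb 2 ((n + 1 : ℝ) / 2 + 1) = Real.logb 2 (n + 3 : ℕ) - 1 := by
    rw [show (n + 1 : ℝ) / 2 + 1 = (n + 3 : ℕ) / 2 by push_cast; ring,
      Real.logb_div (by positivity) two_ne_zero, Real.logb_self_eq_one one_lt_two]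
  rw [hlog, Int.ceil_sub_one, Nat.cast_sub hpos, ← Int.clog_natCast (R := ℝ)]
  push_cast
  rw [← Real.ceil_logb_natCast (by positivity)]
  norm_num

lemma clog_two_add_three_sub_one_le_iff (n ℓ : ℕ) :
    Nat.clog 2 (n + 3) - 1 ≤ ℓ ↔ n < 2 ^ (ℓ + 1) - 2 := by
  rw [Nat.sub_le_iff_le_add, Nat.clog_le_iff_le_pow one_lt_two]
  omega

theorem stmt_12_general {A : Type*} [Fintype A] (M : ℕ)
    (p : A → ℝ) (hp0 : ∀ a, 0 ≤ p a)
    (e : Fin M ≃ A) (hsort : ∀ r r' : Fin M, r ≤ r' → p (e r') ≤ p (e r))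
    (f : A → List Bool) (hinj : Function.Injective f) (hne : ∀ a, f a ≠ []) :
    ∑ r : Fin M, p (e r) * (⌈Real.logb 2 (((r : ℕ) + 1 : ℝ) / 2 + 1)⌉ : ℝ) ≤
      ∑ a : A, p a * ((f a).length : ℝ) := by
  simp only [ceil_logb_two_natCast_add_one_div_two_add_one, Int.cast_natCast]
  rw [← e.sum_comp]
  refine sum_mul_natCast_le_of_forall_sum_filter_le _ fun ℓ => ?_
  simp only [clog_two_add_three_sub_one_le_iff]
  exact Antitone.sum_le_sum_filter_val_lt hsort (fun r => hp0 (e r))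
    (card_filter_length_le_le_two_pow_sub_two (hinj.comp e.injective) (fun r => hne (e r)) ℓ)

/-- **Converse for one-to-one (lossless) variable-length codes** (used in Theorem 2 of the
paper).  Let `A` be a finite set with `M ≥ 1` elements, `p` a pmf on `A`, and
`e : Fin M ≃ A` an enumeration of `A` in non-increasing order of probability, so that
`p (e r)` is the `(r+1)`-st largest value `p_{(r+1)}` of `p`.  Then every injective map `f`
from `A` into the nonempty finite binary strings satisfies
`Σ_a p(a)·len(f(a)) ≥ Σ_{r=1}^{M} p_{(r)} ⌈log₂(r/2 + 1)⌉`. -/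
theorem stmt_12 {A : Type*} [Fintype A] [DecidableEq A] (M : ℕ) (hM : 1 ≤ M)
    (hcard : Fintype.card A = M)
    (p : A → ℝ) (hp0 : ∀ a, 0 ≤ p a) (hp1 : ∑ a, p a = 1)
    (e : Fin M ≃ A) (hsort : ∀ r r' : Fin M, r ≤ r' → p (e r') ≤ p (e r))
    (f : A → List Bool) (hinj : Function.Injective f) (hne : ∀ a, f a ≠ []) :
    ∑ r : Fin M, p (e r) * (⌈Real.logb 2 (((r : ℕ) + 1 : ℝ) / 2 + 1)⌉ : ℝ) ≤
      ∑ a : A, p a * ((f a).length : ℝ) :=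
  stmt_12_general M p hp0 e hsort f hinj hne
end

section
/- Let A be a finite set with |A| = M ≥ 1 and p a probability mass function on A. Then there exists an injective map f from A into the set of nonempty finite binary strings and a bijection r : A → {1,…,M} with p(a) non-increasing in r(a), such that len(f(a)) = ⌈log₂(r(a)/2 + 1)⌉ for every a ∈ A; consequently Σ_{a∈A} p(a)·len(f(a)) = Σ_{r=1}^{M} p_{(r)} · ⌈log₂(r/2 + 1)⌉, where p_{(1)} ≥ … ≥ p_{(M)} are the values of p sorted in non-increasing order. -/
/-!
Rank the messages by non-increasing probability and give the message of rank `r ≥ 1` the binary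
expansion of `r + 1` with its leading `1` removed. The ranks `2^ℓ - 1, …, 2^(ℓ+1) - 2` receive the
`2^ℓ` distinct words of length `ℓ = ⌊log₂(r + 1)⌋ = ⌈log₂(r/2 + 1)⌉`, so the code is injective and
has the required lengths.
-/

namespace Nat

theorem bits_injective : Function.Injective bits := fun m n h =>
  digits_inj_iff.mp (by rw [digits_two_eq_bits, digits_two_eq_bits, h])

theorem length_bits {n : ℕ} (hn : n ≠ 0) : n.bits.length = log 2 n + 1 := by
  rw [← length_digits 2 n one_lt_two hn, digits_two_eq_bits, List.length_map]

theorem dropLast_bits_append {n : ℕ} (hn : n ≠ 0) : n.bits.dropLast ++ [true] = n.bits := by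
  have hne : n.bits ≠ [] := by
    rw [← List.length_pos_iff, length_bits hn]; omega
  have hlast := getLast_digit_ne_zero 2 hn
  simp only [digits_two_eq_bits, List.getLast_map] at hlast
  conv_rhs => rw [← List.dropLast_append_getLast hne]
  congr 2
  revert hlast; cases n.bits.getLast hne <;> simp

theorem clog_add_one_eq_log_add_one {b n : ℕ} (hb : 1 < b) (hn : n ≠ 0) :
    clog b (n + 1) = log b n + 1 :=
  le_antisymm (clog_le_of_le_pow (lt_pow_succ_log_self hb n))
    ((lt_clog_iff_pow_lt hb).2 (lt_succ_of_le (pow_log_le_self b hn)))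

end Nat

theorem Real.ceil_logb_two_div_two_add_one (m : ℕ) :
    ⌈Real.logb 2 ((m : ℝ) / 2 + 1)⌉ = Nat.log 2 (m + 1) := by
  have hhalf : (m : ℝ) / 2 + 1 = ((m + 2 : ℕ) : ℝ) / 2 := by push_cast; ring
  have hceil : ⌈Real.logb 2 ((m + 2 : ℕ) : ℝ)⌉ = Nat.clog 2 (m + 2) := by
    exact_mod_cast Real.ceil_logb_natCast (b := 2) (Nat.cast_nonneg (m + 2))
  rw [hhalf, Real.logb_div (by positivity) two_ne_zero, Real.logb_self_eq_one one_lt_two,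
    Int.ceil_sub_one, hceil, Nat.clog_add_one_eq_log_add_one one_lt_two m.succ_ne_zero]
  push_cast; ring

theorem exists_equiv_fin_antitone {A α : Type*} [Fintype A] [LinearOrder α] {M : ℕ}
    (hcard : Fintype.card A = M) (p : A → α) : ∃ r : A ≃ Fin M, Antitone (p ∘ r.symm) := by
  let e := Fintype.equivFinOfCardEq hcard
  let σ := Tuple.sort (OrderDual.toDual ∘ p ∘ e.symm)
  exact ⟨e.trans σ.symm, Tuple.monotone_sort (OrderDual.toDual ∘ p ∘ e.symm)⟩

/-- `Nat.bits` lists the bits least significant first, so the leading `1` is the last entry. -/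
def oneToOneCode (r : ℕ) : List Bool := (r + 1).bits.dropLast

theorem oneToOneCode_injective : Function.Injective oneToOneCode := fun r s h => by
  have hbits : (r + 1).bits = (s + 1).bits := by
    rw [← Nat.dropLast_bits_append r.succ_ne_zero, ← Nat.dropLast_bits_append s.succ_ne_zero]
    exact congrArg (· ++ [true]) h
  simpa using Nat.bits_injective hbits

theorem length_oneToOneCode (r : ℕ) : (oneToOneCode r).length = Nat.log 2 (r + 1) := by
  simp [oneToOneCode, Nat.length_bits r.succ_ne_zero]

theorem oneToOneCode_ne_nil {r : ℕ} (hr : r ≠ 0) : oneToOneCode r ≠ [] := by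
  rw [← List.length_pos_iff, length_oneToOneCode]
  exact Nat.log_pos one_lt_two (by omega)

theorem stmt_13_general {A : Type*} [Fintype A] (M : ℕ)
    (hcard : Fintype.card A = M)
    (p : A → ℝ) :
    ∃ (f : A → List Bool) (r : A ≃ Fin M),
      Function.Injective f ∧ (∀ a, f a ≠ []) ∧
      (∀ a b : A, r a ≤ r b → p b ≤ p a) ∧
      (∀ a : A, ((f a).length : ℤ) = ⌈Real.logb 2 ((((r a : ℕ) + 1 : ℕ) : ℝ) / 2 + 1)⌉) ∧
      ∑ a : A, p a * ((f a).length : ℝ) =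
        ∑ k : Fin M, p (r.symm k) * (⌈Real.logb 2 (((k : ℕ) + 1 : ℝ) / 2 + 1)⌉ : ℝ) := by
  obtain ⟨r, hr⟩ := exists_equiv_fin_antitone hcard p
  have hlength (a : A) : ((oneToOneCode ((r a : ℕ) + 1)).length : ℤ) =
      ⌈Real.logb 2 ((((r a : ℕ) + 1 : ℕ) : ℝ) / 2 + 1)⌉ := by
    rw [length_oneToOneCode, Real.ceil_logb_two_div_two_add_one]
  refine ⟨fun a => oneToOneCode ((r a : ℕ) + 1), r,
    oneToOneCode_injective.comp ((add_left_injective 1).comp (Fin.val_injective.comp r.injective)),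
    fun a => oneToOneCode_ne_nil (Nat.succ_ne_zero _), fun a b hab => by simpa using hr hab,
    hlength, ?_⟩
  refine Fintype.sum_equiv r _ _ fun a => ?_
  rw [r.symm_apply_apply, ← Nat.cast_add_one, ← hlength a, Int.cast_natCast]

/-- **Achievability for one-to-one (lossless) variable-length codes** (used in Theorem 2 of
the paper).  Let `A` be a finite set with `M ≥ 1` elements and `p` a pmf on `A`.  There is
an injective map `f` from `A` into the nonempty finite binary strings and a ranking
bijection `r : A ≃ Fin M` with `p` non-increasing in the rank, such that the codeword of
the message of rank `r` has length `⌈log₂(r/2 + 1)⌉` (ranks being `(r a : ℕ) + 1 ∈ {1,…,M}`);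
consequently the expected length equals `Σ_{r=1}^{M} p_{(r)} ⌈log₂(r/2 + 1)⌉`, where
`p_{(r)} = p (r.symm (r−1))` are the values of `p` in non-increasing order. -/
theorem stmt_13 {A : Type*} [Fintype A] [DecidableEq A] (M : ℕ) (hM : 1 ≤ M)
    (hcard : Fintype.card A = M)
    (p : A → ℝ) (hp0 : ∀ a, 0 ≤ p a) (hp1 : ∑ a, p a = 1) :
    ∃ (f : A → List Bool) (r : A ≃ Fin M),
      Function.Injective f ∧ (∀ a, f a ≠ []) ∧
      (∀ a b : A, r a ≤ r b → p b ≤ p a) ∧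
      (∀ a : A, ((f a).length : ℤ) = ⌈Real.logb 2 ((((r a : ℕ) + 1 : ℕ) : ℝ) / 2 + 1)⌉) ∧
      ∑ a : A, p a * ((f a).length : ℝ) =
        ∑ k : Fin M, p (r.symm k) * (⌈Real.logb 2 (((k : ℕ) + 1 : ℝ) / 2 + 1)⌉ : ℝ) :=
  stmt_13_general M hcard p
end

section
/- Let 𝒮 be a finite set equipped with a probability vector π, and let 𝒜 be a finite nonempty set of messages with |𝒜| = M. For each S ∈ 𝒮, let p_S be a probability mass function on 𝒜 and let r_S : 𝒜 → {1,…,M} be a bijection such that p_S(a) is non-increasing in r_S(a). Then the minimum, over all families (f_S)_{S∈𝒮} of injective maps f_S from 𝒜 into the set of nonempty finite binary strings, of the stationary average expected codeword length Σ_{S∈𝒮} π(S) Σ_{a∈𝒜} p_S(a)·len(f_S(a)) equals Σ_{S∈𝒮} π(S) Σ_{a∈𝒜} p_S(a) · ⌈log₂(r_S(a)/2 + 1)⌉. -/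
/-!
Nonempty binary strings correspond bijectively to the integers `n ≥ 2` by reading them as
binary expansions with an implicit leading `1`, and a string has length `⌊log₂ n⌋`. An
injective codebook therefore assigns distinct integers `≥ 2` to the messages; sorted, the
`k`-th of them is at least `k + 2`, so by the rearrangement inequality the expected length
is at least `Σ p(a) ⌊log₂(rank(a) + 1)⌋`. Giving the message of rank `k + 1` the string of
`k + 2` attains this bound, and `⌈log₂((k + 1)/2 + 1)⌉ = ⌊log₂(k + 2)⌋`.
-/

open Finset

/-- Reads `l` as the binary digits, least significant first, of a number whose leading `1` is
left implicit. -/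
def valWithLeadingOne (l : List Bool) : ℕ :=
  l.foldr Nat.bit 1

@[simp]
lemma valWithLeadingOne_nil : valWithLeadingOne [] = 1 := rfl

@[simp]
lemma valWithLeadingOne_cons (b : Bool) (l : List Bool) :
    valWithLeadingOne (b :: l) = Nat.bit b (valWithLeadingOne l) := rfl

lemma valWithLeadingOne_pos (l : List Bool) : 0 < valWithLeadingOne l := by
  induction l with
  | nil => simp
  | cons b l ih => rw [valWithLeadingOne_cons, Nat.bit_val]; omega

lemma two_le_valWithLeadingOne {l : List Bool} (hl : l ≠ []) : 2 ≤ valWithLeadingOne l := by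
  obtain ⟨b, l, rfl⟩ := List.exists_cons_of_ne_nil hl
  have := valWithLeadingOne_pos l
  rw [valWithLeadingOne_cons, Nat.bit_val]
  omega

lemma log_valWithLeadingOne (l : List Bool) : Nat.log 2 (valWithLeadingOne l) = l.length := by
  induction l with
  | nil => simp
  | cons b l ih =>
    rw [Nat.log_of_one_lt_of_le one_lt_two (two_le_valWithLeadingOne (List.cons_ne_nil b l)),
      valWithLeadingOne_cons, Nat.bit_div_two, ih, List.length_cons]

lemma valWithLeadingOne_injective : Function.Injective valWithLeadingOne := by
  intro l₁
  induction l₁ with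
  | nil =>
    rintro (_ | ⟨c, l₂⟩) h
    · rfl
    · have := two_le_valWithLeadingOne (List.cons_ne_nil c l₂)
      simp only [valWithLeadingOne_nil, valWithLeadingOne_cons] at h this
      omega
  | cons b l₁ ih =>
    rintro (_ | ⟨c, l₂⟩) h
    · have := two_le_valWithLeadingOne (List.cons_ne_nil b l₁)
      simp only [valWithLeadingOne_nil, valWithLeadingOne_cons] at h this
      omega
    · simp only [valWithLeadingOne_cons] at h
      have hbc : b = c := by simpa only [Nat.bodd_bit] using congrArg Nat.bodd h
      have hl : l₁ = l₂ :=
        ih (by rw [← Nat.bit_div_two b (valWithLeadingOne l₁), h, Nat.bit_div_two])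
      rw [hbc, hl]

lemma exists_valWithLeadingOne_eq {n : ℕ} (hn : n ≠ 0) : ∃ l, valWithLeadingOne l = n := by
  induction n using Nat.binaryRecFromOne with
  | zero => exact absurd rfl hn
  | one => exact ⟨[], rfl⟩
  | bit b n hn' ih =>
    obtain ⟨l, hl⟩ := ih hn'
    exact ⟨b :: l, by rw [valWithLeadingOne_cons, hl]⟩

lemma exists_code_length_eq_log :
    ∃ code : ℕ → List Bool, Function.Injective code ∧
      ∀ k, code k ≠ [] ∧ (code k).length = Nat.log 2 (k + 2) := by
  choose code hcode using fun k : ℕ => exists_valWithLeadingOne_eq (n := k + 2) (by omega)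
  refine ⟨code, fun j k h => by simpa [hcode] using congrArg valWithLeadingOne h,
    fun k => ⟨fun h => ?_, ?_⟩⟩
  · simpa [h] using hcode k
  · rw [← log_valWithLeadingOne, hcode]

lemma Fin.val_add_le_of_strictMono {M c : ℕ} {u : Fin M → ℕ} (hu : StrictMono u)
    (hc : ∀ i, c ≤ u i) (i : Fin M) : i + c ≤ u i := by
  obtain ⟨k, hk⟩ := i
  induction k with
  | zero => simpa using hc _
  | succ k ih =>
    have := @hu ⟨k, by omega⟩ ⟨k + 1, hk⟩ (Fin.mk_lt_mk.mpr k.lt_succ_self)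
    have := ih (by omega)
    simp only at *
    omega

/-- Sorted, the values of `v` dominate `c, c + 1, …`; the rearrangement inequality then moves
the weights back to their own values. -/
theorem sum_mul_add_le_sum_mul_of_injective {M c : ℕ} {q : Fin M → ℝ} (hq0 : ∀ i, 0 ≤ q i)
    (hq : Antitone q) {φ : ℕ → ℝ} (hφ : Monotone φ) {v : Fin M → ℕ}
    (hv : Function.Injective v) (hc : ∀ i, c ≤ v i) :
    ∑ i, q i * φ (i + c) ≤ ∑ i, q i * φ (v i) := by
  set σ := Tuple.sort v
  have hsorted : StrictMono (v ∘ σ) :=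
    (Tuple.monotone_sort v).strictMono_of_injective (hv.comp σ.injective)
  calc ∑ i, q i * φ (i + c)
      ≤ ∑ i, q i * φ (v (σ i)) := by
        gcongr with i
        · exact hq0 i
        · exact hφ (Fin.val_add_le_of_strictMono hsorted (fun i => hc (σ i)) i)
    _ ≤ ∑ i, q (σ i) * φ (v (σ i)) :=
        (hq.antivary (hφ.comp hsorted.monotone)).sum_mul_le_sum_comp_perm_mul
    _ = ∑ i, q i * φ (v i) := Equiv.sum_comp σ fun i => q i * φ (v i)

theorem sum_mul_log_le_sum_mul_length {A : Type*} [Fintype A] {M : ℕ} (r : A ≃ Fin M)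
    {p : A → ℝ} (hp0 : ∀ a, 0 ≤ p a) (hsort : ∀ a b, r a ≤ r b → p b ≤ p a)
    {f : A → List Bool} (hf : Function.Injective f) (hne : ∀ a, f a ≠ []) :
    ∑ a, p a * (Nat.log 2 (r a + 2) : ℝ) ≤ ∑ a, p a * ((f a).length : ℝ) := by
  have key := sum_mul_add_le_sum_mul_of_injective (q := p ∘ r.symm) (c := 2)
    (fun i => hp0 _) (fun i j hij => hsort _ _ (by simpa using hij))
    (φ := fun n => (Nat.log 2 n : ℝ)) (fun m n h => Nat.cast_le.mpr (Nat.log_mono_right h))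
    (v := valWithLeadingOne ∘ f ∘ r.symm)
    (valWithLeadingOne_injective.comp (hf.comp r.symm.injective))
    (fun i => two_le_valWithLeadingOne (hne _))
  simp only [Function.comp, log_valWithLeadingOne] at key
  rw [← r.symm.sum_comp, ← r.symm.sum_comp fun a => p a * ((f a).length : ℝ)]
  simpa only [Equiv.apply_symm_apply] using key

lemma ceil_logb_two_add_one_div_two {n : ℕ} (hn : n ≠ 0) :
    ⌈Real.logb 2 ((n + 1 : ℝ) / 2)⌉ = Nat.log 2 n := by
  have hlo : 2 ^ Nat.log 2 n ≤ n := Nat.pow_log_le_self 2 hn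
  have hhi : n < 2 ^ (Nat.log 2 n + 1) := Nat.lt_pow_succ_log_self one_lt_two n
  have hx : (0 : ℝ) < (n + 1) / 2 := by positivity
  rw [Int.ceil_eq_iff, Int.cast_natCast, Real.lt_logb_iff_rpow_lt one_lt_two hx,
    Real.logb_le_iff_le_rpow one_lt_two hx, Real.rpow_sub two_pos, Real.rpow_one,
    Real.rpow_natCast]
  constructor
  · rw [div_lt_div_iff_of_pos_right two_pos]
    exact_mod_cast Nat.lt_succ_of_le hlo
  · rw [div_le_iff₀ two_pos, ← pow_succ]
    exact_mod_cast hhi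

theorem stmt_14_general {𝒮 A : Type*} [Fintype 𝒮] [Fintype A]
    (M : ℕ)
    (π : 𝒮 → ℝ) (hπ0 : ∀ s, 0 ≤ π s)
    (p : 𝒮 → A → ℝ) (hp0 : ∀ s a, 0 ≤ p s a)
    (r : (s : 𝒮) → A ≃ Fin M)
    (hsort : ∀ (s : 𝒮) (a b : A), r s a ≤ r s b → p s b ≤ p s a) :
    IsLeast
      {x : ℝ | ∃ f : 𝒮 → A → List Bool,
        (∀ s, Function.Injective (f s)) ∧ (∀ s a, f s a ≠ []) ∧
        x = ∑ s, π s * ∑ a, p s a * ((f s a).length : ℝ)}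
      (∑ s, π s * ∑ a, p s a * (⌈Real.logb 2 (((r s a : ℕ) + 1 : ℝ) / 2 + 1)⌉ : ℝ)) := by
  have hceil (k : ℕ) :
      (⌈Real.logb 2 ((k + 1 : ℝ) / 2 + 1)⌉ : ℝ) = Nat.log 2 (k + 2) := by
    rw [show (k + 1 : ℝ) / 2 + 1 = ((k + 2 : ℕ) + 1 : ℝ) / 2 by push_cast; ring,
      ceil_logb_two_add_one_div_two (by omega), Int.cast_natCast]
  simp only [hceil]
  obtain ⟨code, hcode_inj, hcode⟩ := exists_code_length_eq_log
  refine ⟨⟨fun s a => code (r s a),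
    fun s => hcode_inj.comp (Fin.val_injective.comp (r s).injective),
    fun s a => (hcode _).1, by simp only [(hcode _).2]⟩, ?_⟩
  rintro _ ⟨f, hf, hne, rfl⟩
  exact sum_le_sum fun s _ => mul_le_mul_of_nonneg_left
    (sum_mul_log_le_sum_mul_length (r s) (hp0 s) (hsort s) (hf s) (hne s)) (hπ0 s)

/-- **Optimal state-dependent one-to-one compression (Theorem 2 of the paper).**  Let `𝒮`
be a finite set with probability vector `π` and `A` a finite nonempty message set with `M`
elements.  For each `S ∈ 𝒮` let `p S` be a pmf on `A` and `r S : A ≃ Fin M` a ranking with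
`p S` non-increasing in the rank.  Then the minimum, over all families `(f S)` of injective
maps from `A` into the nonempty finite binary strings, of the stationary average expected
codeword length `Σ_S π(S) Σ_a p_S(a) len(f_S(a))` is attained and equals
`Σ_S π(S) Σ_a p_S(a) ⌈log₂((rank of a under r S)/2 + 1)⌉` (ranks being `(r S a : ℕ) + 1`). -/
theorem stmt_14 {𝒮 A : Type*} [Fintype 𝒮] [Fintype A] [Nonempty A] [DecidableEq A]
    (M : ℕ) (hM : 1 ≤ M) (hcard : Fintype.card A = M)
    (π : 𝒮 → ℝ) (hπ0 : ∀ s, 0 ≤ π s) (hπ1 : ∑ s, π s = 1)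
    (p : 𝒮 → A → ℝ) (hp0 : ∀ s a, 0 ≤ p s a) (hp1 : ∀ s, ∑ a, p s a = 1)
    (r : (s : 𝒮) → A ≃ Fin M)
    (hsort : ∀ (s : 𝒮) (a b : A), r s a ≤ r s b → p s b ≤ p s a) :
    IsLeast
      {x : ℝ | ∃ f : 𝒮 → A → List Bool,
        (∀ s, Function.Injective (f s)) ∧ (∀ s a, f s a ≠ []) ∧
        x = ∑ s, π s * ∑ a, p s a * ((f s a).length : ℝ)}
      (∑ s, π s * ∑ a, p s a * (⌈Real.logb 2 (((r s a : ℕ) + 1 : ℝ) / 2 + 1)⌉ : ℝ)) :=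
  stmt_14_general M π hπ0 p hp0 r hsort
end
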